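/- Let (X, ≪) be a weakly distinguishing chronological set and X̄ any completion of X. Then the chronological set (X̄, ≪̄) is complete: every (future or past) chain in X̄ has some endpoint lying in i_{X̄}[X̄], where i_{X̄}(y) = (I⁻(y), I⁺(y)) is computed with ≪̄ in X̄. -/
import Mathlib


namespace CausalBoundary

variable {X : Type*}

/-- The past of a set of points: `I⁻[S]`. -/
def pastOf (r : X → X → Prop) (S : Set X) : Set X := {x | ∃ s ∈ S, r x s}

/-- The future of a set of points: `I⁺[S]`. -/
def futureOf (r : X → X → Prop) (S : Set X) : Set X := {x | ∃ s ∈ S, r s x}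

/-- The past of a point: `I⁻(x)`. -/
def pastPt (r : X → X → Prop) (x : X) : Set X := {y | r y x}

/-- The future of a point: `I⁺(x)`. -/
def futPt (r : X → X → Prop) (x : X) : Set X := {y | r x y}

/-- A past set: `P = I⁻[P]`. -/
def IsPastSet (r : X → X → Prop) (P : Set X) : Prop := P = pastOf r P

/-- A future set: `F = I⁺[F]`. -/
def IsFutureSet (r : X → X → Prop) (F : Set X) : Prop := F = futureOf r F

/-- An indecomposable past set (IP): a nonempty past set which is not the union of
two proper subsets which are both past sets. -/
def IsIP (r : X → X → Prop) (P : Set X) : Prop :=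
  IsPastSet r P ∧ P.Nonempty ∧
    ¬ ∃ P₁ P₂ : Set X, IsPastSet r P₁ ∧ IsPastSet r P₂ ∧ P₁ ⊂ P ∧ P₂ ⊂ P ∧ P = P₁ ∪ P₂

/-- An indecomposable future set (IF). -/
def IsIF (r : X → X → Prop) (F : Set X) : Prop :=
  IsFutureSet r F ∧ F.Nonempty ∧
    ¬ ∃ F₁ F₂ : Set X, IsFutureSet r F₁ ∧ IsFutureSet r F₂ ∧ F₁ ⊂ F ∧ F₂ ⊂ F ∧ F = F₁ ∪ F₂

/-- `dec(P)`: the set of all maximal IPs (under inclusion) contained in `P`. -/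
def decP (r : X → X → Prop) (P : Set X) : Set (Set X) :=
  {Q | IsIP r Q ∧ Q ⊆ P ∧ ∀ Q' : Set X, IsIP r Q' → Q' ⊆ P → Q ⊆ Q' → Q = Q'}

/-- `dec(F)` for future sets: the set of all maximal IFs contained in `F`. -/
def decF (r : X → X → Prop) (F : Set X) : Set (Set X) :=
  {Q | IsIF r Q ∧ Q ⊆ F ∧ ∀ Q' : Set X, IsIF r Q' → Q' ⊆ F → Q ⊆ Q' → Q = Q'}

/-- Inferior limit of a sequence of sets: `LI(Aₙ) = ∪ₙ ∩_{k ≥ n} A_k`. -/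
def seqLI (A : ℕ → Set X) : Set X := ⋃ n, ⋂ k, ⋂ (_ : n ≤ k), A k

/-- Superior limit of a sequence of sets: `LS(Aₙ) = ∩ₙ ∪_{k ≥ n} A_k`. -/
def seqLS (A : ℕ → Set X) : Set X := ⋂ n, ⋃ k, ⋃ (_ : n ≤ k), A k

/-- The limit operator `L̂`: `P ∈ L̂(σ)` iff `P` is an IP with `P ⊆ LI(I⁻(σₙ))` and
`P` is a maximal IP within `LS(I⁻(σₙ))`. -/
def Lhat (r : X → X → Prop) (σ : ℕ → X) : Set (Set X) :=
  {P | IsIP r P ∧ P ⊆ seqLI (fun n => pastPt r (σ n)) ∧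
    P ⊆ seqLS (fun n => pastPt r (σ n)) ∧
    ∀ P' : Set X, IsIP r P' → P' ⊆ seqLS (fun n => pastPt r (σ n)) → P ⊆ P' → P = P'}

/-- The limit operator `Ľ`, dual to `L̂`. -/
def Lcheck (r : X → X → Prop) (σ : ℕ → X) : Set (Set X) :=
  {F | IsIF r F ∧ F ⊆ seqLI (fun n => futPt r (σ n)) ∧
    F ⊆ seqLS (fun n => futPt r (σ n)) ∧
    ∀ F' : Set X, IsIF r F' → F' ⊆ seqLS (fun n => futPt r (σ n)) → F ⊆ F' → F = F'}

/-- The limit operator `L`: `x ∈ L(σ)` iff `dec(I⁻(x)) ⊆ L̂(σ)` and `dec(I⁺(x)) ⊆ Ľ(σ)`. -/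
def limitOp (r : X → X → Prop) (σ : ℕ → X) : Set X :=
  {x | decP r (pastPt r x) ⊆ Lhat r σ ∧ decF r (futPt r x) ⊆ Lcheck r σ}

/-- A future chain: a sequence with `xₙ ≪ xₙ₊₁`. -/
def IsFutureChain (r : X → X → Prop) (c : ℕ → X) : Prop := ∀ n, r (c n) (c (n + 1))

/-- A past chain: a sequence with `xₙ₊₁ ≪ xₙ`. -/
def IsPastChain (r : X → X → Prop) (c : ℕ → X) : Prop := ∀ n, r (c (n + 1)) (c n)

/-- A (future or past) chain. -/
def IsChronChain (r : X → X → Prop) (c : ℕ → X) : Prop :=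
  IsFutureChain r c ∨ IsPastChain r c

/-- `(X, r)` is a chronological set: `r` is transitive and irreflexive, there are no
isolates, and there is a countable dense subset. -/
def IsChronSet (r : X → X → Prop) : Prop :=
  Transitive r ∧ Irreflexive r ∧ (∀ x : X, ∃ y : X, r x y ∨ r y x) ∧
    ∃ D : Set X, D.Countable ∧ ∀ x y : X, r x y → ∃ d ∈ D, r x d ∧ r d y

/-- Weakly distinguishing: points with the same past and future coincide. -/
def WeaklyDist (r : X → X → Prop) : Prop :=
  ∀ x y : X, pastPt r x = pastPt r y → futPt r x = futPt r y → x = y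

/-- The natural injection `i(x) = (I⁻(x), I⁺(x))` into `X_p × X_f`. -/
def inj (r : X → X → Prop) (x : X) : Set X × Set X := (pastPt r x, futPt r x)

/-- `(P, F) ∈ X_p × X_f` is an endpoint of a future chain `c` if `P = I⁻[c]` and
`dec(F) ⊆ Ľ(c)`; of a past chain if `F = I⁺[c]` and `dec(P) ⊆ L̂(c)`. -/
def IsEndpoint (r : X → X → Prop) (c : ℕ → X) (p : Set X × Set X) : Prop :=
  IsPastSet r p.1 ∧ IsFutureSet r p.2 ∧
    ((IsFutureChain r c ∧ p.1 = pastOf r (Set.range c) ∧ decF r p.2 ⊆ Lcheck r c) ∨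
     (IsPastChain r c ∧ p.2 = futureOf r (Set.range c) ∧ decP r p.1 ⊆ Lhat r c))

/-- `X^end`: the union of `i[X]` with all endpoints of all chains in `X`. -/
def endSet (r : X → X → Prop) : Set (Set X × Set X) :=
  Set.range (inj r) ∪ {p | ∃ c : ℕ → X, IsChronChain r c ∧ IsEndpoint r c p}

/-- A completion of `X`: a set `X̄` with `i[X] ⊆ X̄ ⊆ X^end` such that every chain
in `X` has some endpoint in `X̄`. -/
def IsCompletion (r : X → X → Prop) (Xb : Set (Set X × Set X)) : Prop :=
  Set.range (inj r) ⊆ Xb ∧ Xb ⊆ endSet r ∧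
    ∀ c : ℕ → X, IsChronChain r c → ∃ p ∈ Xb, IsEndpoint r c p

/-- The chronology on pairs: `(P,F) ≪̄ (P',F')` iff `F ∩ P' ≠ ∅`. -/
def llbar (p q : Set X × Set X) : Prop := (p.2 ∩ q.1).Nonempty

/-- The chronology `≪̄` on a completion, viewed on the subtype. -/
def subRel (Xb : Set (Set X × Set X)) (a b : ↥Xb) : Prop := llbar a.1 b.1

/-- The injection of `X` into a completion `X̄` (as a subtype). -/
def iota (r : X → X → Prop) (Xb : Set (Set X × Set X))
    (h : Set.range (inj r) ⊆ Xb) (x : X) : ↥Xb := ⟨inj r x, h ⟨x, rfl⟩⟩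

end CausalBoundary

open CausalBoundary
namespace CausalBoundary

section Aux

variable {X : Type*} {r : X → X → Prop} {P F Q S : Set X}

/-- Density hypothesis abbreviation. -/
def RelDense (r : X → X → Prop) : Prop := ∀ x y : X, r x y → ∃ d, r x d ∧ r d y

lemma trans_flip (htr : Transitive r) : Transitive (flip r) :=
  fun _ _ _ h1 h2 => htr h2 h1

lemma dense_flip (hd : RelDense r) : RelDense (flip r) :=
  fun x y hxy => let ⟨d, h1, h2⟩ := hd y x hxy; ⟨d, h2, h1⟩

lemma IsFutureSet.up (hF : IsFutureSet r F) {a b : X} (ha : a ∈ F) (hab : r a b) : b ∈ F := by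
  rw [hF]; exact ⟨a, ha, hab⟩

lemma IsFutureSet.pred (hF : IsFutureSet r F) {b : X} (hb : b ∈ F) : ∃ a ∈ F, r a b := by
  rw [hF] at hb; exact hb

lemma IsPastSet.down (hP : IsPastSet r P) {a b : X} (hb : b ∈ P) (hab : r a b) : a ∈ P := by
  rw [hP]; exact ⟨b, hb, hab⟩

lemma IsPastSet.succ (hP : IsPastSet r P) {a : X} (ha : a ∈ P) : ∃ b ∈ P, r a b := by
  rw [hP] at ha; exact ha

lemma isFutureSet_futPt (htr : Transitive r) (hd : RelDense r) (x : X) :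
    IsFutureSet r (futPt r x) := by
  ext z
  constructor
  · intro hz
    obtain ⟨d, h1, h2⟩ := hd x z hz
    exact ⟨d, h1, h2⟩
  · rintro ⟨s, hs, hsz⟩
    exact htr hs hsz

lemma isPastSet_pastPt (htr : Transitive r) (hd : RelDense r) (x : X) :
    IsPastSet r (pastPt r x) :=
  isFutureSet_futPt (r := flip r) (trans_flip htr) (dense_flip hd) x

lemma isFutureSet_futureOf (htr : Transitive r) (hd : RelDense r) :
    IsFutureSet r (futureOf r S) := by
  ext z
  constructor
  · rintro ⟨s, hs, hsz⟩
    obtain ⟨d, h1, h2⟩ := hd s z hsz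
    exact ⟨d, ⟨s, hs, h1⟩, h2⟩
  · rintro ⟨w, ⟨s, hs, h1⟩, h2⟩
    exact ⟨s, hs, htr h1 h2⟩

lemma isPastSet_pastOf (htr : Transitive r) (hd : RelDense r) :
    IsPastSet r (pastOf r S) :=
  isFutureSet_futureOf (r := flip r) (S := S) (trans_flip htr) (dense_flip hd)

lemma isIF_of_directed (hF : IsFutureSet r F) (hne : F.Nonempty)
    (hdir : ∀ a ∈ F, ∀ b ∈ F, ∃ c ∈ F, r c a ∧ r c b) : IsIF r F := by
  refine ⟨hF, hne, ?_⟩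
  rintro ⟨F₁, F₂, h1, h2, hs1, hs2, hu⟩
  obtain ⟨a, haF, ha1⟩ := Set.exists_of_ssubset hs1
  obtain ⟨b, hbF, hb2⟩ := Set.exists_of_ssubset hs2
  obtain ⟨c, hcF, hca, hcb⟩ := hdir a haF b hbF
  rcases (hu ▸ hcF : c ∈ F₁ ∪ F₂) with hc1 | hc2
  · exact ha1 (h1.up hc1 hca)
  · exact hb2 (h2.up hc2 hcb)

lemma isIP_of_directed (hP : IsPastSet r P) (hne : P.Nonempty)
    (hdir : ∀ a ∈ P, ∀ b ∈ P, ∃ c ∈ P, r a c ∧ r b c) : IsIP r P :=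
  isIF_of_directed (r := flip r) hP hne hdir

lemma IsIF.directed (htr : Transitive r) (hd : RelDense r) (hF : IsIF r F) {a b : X}
    (ha : a ∈ F) (hb : b ∈ F) : ∃ c ∈ F, r c a ∧ r c b := by
  by_contra hcon
  push_neg at hcon
  apply hF.2.2
  refine ⟨futureOf r {w | w ∈ F ∧ ¬ r w a}, futureOf r {w | w ∈ F ∧ ¬ r w b},
    isFutureSet_futureOf htr hd, isFutureSet_futureOf htr hd, ?_, ?_, ?_⟩
  · constructor
    · rintro z ⟨w, ⟨hwF, _⟩, hwz⟩
      exact hF.1.up hwF hwz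
    · intro hsub
      have : a ∈ futureOf r {w | w ∈ F ∧ ¬ r w a} := hsub ha
      obtain ⟨w, ⟨hwF, hwa⟩, hwz⟩ := this
      exact hwa hwz
  · constructor
    · rintro z ⟨w, ⟨hwF, _⟩, hwz⟩
      exact hF.1.up hwF hwz
    · intro hsub
      obtain ⟨w, ⟨hwF, hwb⟩, hwz⟩ := hsub hb
      exact hwb hwz
  · apply Set.Subset.antisymm
    · intro z hz
      obtain ⟨u, huF, huz⟩ := hF.1.pred hz
      by_cases hua : r u a
      · exact Or.inr ⟨u, ⟨huF, fun hub => hcon u huF hua hub⟩, huz⟩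
      · exact Or.inl ⟨u, ⟨huF, hua⟩, huz⟩
    · rintro z (⟨w, ⟨hwF, _⟩, hwz⟩ | ⟨w, ⟨hwF, _⟩, hwz⟩) <;> exact hF.1.up hwF hwz

lemma IsIP.directed (htr : Transitive r) (hd : RelDense r) (hP : IsIP r P) {a b : X}
    (ha : a ∈ P) (hb : b ∈ P) : ∃ c ∈ P, r a c ∧ r b c :=
  IsIF.directed (r := flip r) (trans_flip htr) (dense_flip hd) hP ha hb

end Aux

end CausalBoundary
namespace CausalBoundary

section Aux2

variable {X : Type*} {r : X → X → Prop} {P F Q : Set X}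

lemma mem_seqLI {A : ℕ → Set X} {x : X} : x ∈ seqLI A ↔ ∃ n, ∀ k, n ≤ k → x ∈ A k := by
  simp [seqLI]

lemma mem_seqLS {A : ℕ → Set X} {x : X} : x ∈ seqLS A ↔ ∀ n, ∃ k, n ≤ k ∧ x ∈ A k := by
  simp [seqLS]

lemma seqLI_subset_seqLS {A : ℕ → Set X} : seqLI A ⊆ seqLS A := by
  intro x hx
  obtain ⟨m, hm⟩ := mem_seqLI.1 hx
  exact mem_seqLS.2 fun n => ⟨max n m, le_max_left _ _, hm _ (le_max_right _ _)⟩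

lemma IsFutureChain.lt (htr : Transitive r) {c : ℕ → X} (hc : IsFutureChain r c)
    {m n : ℕ} (h : m < n) : r (c m) (c n) := by
  induction n with
  | zero => omega
  | succ n ih =>
    rcases Nat.lt_succ_iff_lt_or_eq.mp h with h' | h'
    · exact htr (ih h') (hc n)
    · subst h'; exact hc m

lemma IsPastChain.lt (htr : Transitive r) {c : ℕ → X} (hc : IsPastChain r c)
    {m n : ℕ} (h : m < n) : r (c n) (c m) :=
  IsFutureChain.lt (r := flip r) (trans_flip htr) hc h

lemma exists_maxIF (htr : Transitive r) (hd : RelDense r) (hF : IsFutureSet r F)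
    (hQ : IsIF r Q) (hQF : Q ⊆ F) : ∃ M ∈ decF r F, Q ⊆ M := by
  have H : ∀ c ⊆ {Q' | IsIF r Q' ∧ Q' ⊆ F}, IsChain (· ⊆ ·) c → c.Nonempty →
      ∃ ub ∈ {Q' | IsIF r Q' ∧ Q' ⊆ F}, ∀ s ∈ c, s ⊆ ub := by
    intro c hcS hchain hcne
    refine ⟨⋃₀ c, ⟨?_, ?_⟩, fun s hs => Set.subset_sUnion_of_mem hs⟩
    · obtain ⟨A, hA⟩ := hcne
      have hAne : A.Nonempty := (hcS hA).1.2.1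
      apply isIF_of_directed
      · apply Set.Subset.antisymm
        · rintro z ⟨A, hAc, hzA⟩
          obtain ⟨u, hu, huz⟩ := (hcS hAc).1.1.pred hzA
          exact ⟨u, ⟨A, hAc, hu⟩, huz⟩
        · rintro z ⟨u, ⟨A, hAc, huA⟩, huz⟩
          exact ⟨A, hAc, (hcS hAc).1.1.up huA huz⟩
      · exact ⟨hAne.choose, A, hA, hAne.choose_spec⟩
      · rintro a ⟨A, hAc, haA⟩ b ⟨B, hBc, hbB⟩
        rcases hchain.total hAc hBc with hAB | hBA
        · obtain ⟨z, hz, hza, hzb⟩ := (hcS hBc).1.directed htr hd (hAB haA) hbB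
          exact ⟨z, ⟨B, hBc, hz⟩, hza, hzb⟩
        · obtain ⟨z, hz, hza, hzb⟩ := (hcS hAc).1.directed htr hd haA (hBA hbB)
          exact ⟨z, ⟨A, hAc, hz⟩, hza, hzb⟩
    · rintro z ⟨A, hAc, hzA⟩
      exact (hcS hAc).2 hzA
  obtain ⟨M, hQM, hMmem, hMmax⟩ := zorn_subset_nonempty _ H Q ⟨hQ, hQF⟩
  exact ⟨M, ⟨hMmem.1, hMmem.2, fun Q'' h1 h2 h3 =>
    Set.Subset.antisymm h3 (hMmax ⟨h1, h2⟩ h3)⟩, hQM⟩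

lemma exists_maxIP (htr : Transitive r) (hd : RelDense r) (hP : IsPastSet r P)
    (hQ : IsIP r Q) (hQP : Q ⊆ P) : ∃ M ∈ decP r P, Q ⊆ M :=
  exists_maxIF (r := flip r) (trans_flip htr) (dense_flip hd) hP hQ hQP

lemma isIF_futureOf_pastChain (htr : Transitive r) (hd : RelDense r) {s : ℕ → X}
    (hs : IsPastChain r s) : IsIF r (futureOf r (Set.range s)) := by
  apply isIF_of_directed (isFutureSet_futureOf htr hd)
  · exact ⟨s 0, s 1, ⟨1, rfl⟩, hs 0⟩
  · rintro a ⟨_, ⟨n, rfl⟩, hna⟩ b ⟨_, ⟨m, rfl⟩, hmb⟩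
    refine ⟨s (max n m + 1), ⟨s (max n m + 2), ⟨_, rfl⟩, hs _⟩, ?_, ?_⟩
    · exact htr (hs.lt htr (Nat.lt_succ_of_le (le_max_left _ _))) hna
    · exact htr (hs.lt htr (Nat.lt_succ_of_le (le_max_right _ _))) hmb

lemma isIP_pastOf_futureChain (htr : Transitive r) (hd : RelDense r) {s : ℕ → X}
    (hs : IsFutureChain r s) : IsIP r (pastOf r (Set.range s)) :=
  isIF_futureOf_pastChain (r := flip r) (trans_flip htr) (dense_flip hd) hs

lemma exists_mem_maxIF (htr : Transitive r) (hd : RelDense r) (hF : IsFutureSet r F)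
    {v : X} (hv : v ∈ F) : ∃ M ∈ decF r F, v ∈ M := by
  have hg : ∀ w : X, ∃ w', w ∈ F → (w' ∈ F ∧ r w' w) := by
    intro w
    by_cases hw : w ∈ F
    · obtain ⟨a, ha, har⟩ := hF.pred hw
      exact ⟨a, fun _ => ⟨ha, har⟩⟩
    · exact ⟨w, fun h => absurd h hw⟩
  choose g hg using hg
  set s : ℕ → X := fun n => g^[n + 1] v with hsdef
  have hstep : ∀ n, s (n + 1) = g (s n) := by
    intro n
    simp only [hsdef, Function.iterate_succ_apply']
  have hsF : ∀ n, s n ∈ F := by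
    intro n
    induction n with
    | zero =>
      have : s 0 = g v := by simp [hsdef]
      rw [this]; exact (hg v hv).1
    | succ n ih => rw [hstep n]; exact (hg _ ih).1
  have hchain : IsPastChain r s := by
    intro n
    rw [hstep n]
    exact (hg _ (hsF n)).2
  obtain ⟨M, hM, hQM⟩ := exists_maxIF htr hd hF (isIF_futureOf_pastChain htr hd hchain)
    (by rintro z ⟨_, ⟨n, rfl⟩, hnz⟩; exact hF.up (hsF n) hnz)
  refine ⟨M, hM, hQM ⟨s 0, ⟨0, rfl⟩, ?_⟩⟩
  show r (s 0) v
  have : s 0 = g v := by simp [hsdef]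
  rw [this]; exact (hg v hv).2

lemma exists_mem_maxIP (htr : Transitive r) (hd : RelDense r) (hP : IsPastSet r P)
    {v : X} (hv : v ∈ P) : ∃ M ∈ decP r P, v ∈ M :=
  exists_mem_maxIF (r := flip r) (trans_flip htr) (dense_flip hd) hP hv

end Aux2

end CausalBoundary
namespace CausalBoundary

section Aux3

variable {X : Type*} {r : X → X → Prop}

lemma endSet_pastSet (htr : Transitive r) (hd : RelDense r) {q : Set X × Set X}
    (hq : q ∈ endSet r) : IsPastSet r q.1 := by
  rcases hq with ⟨w, rfl⟩ | ⟨c, _, hend⟩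
  · exact isPastSet_pastPt htr hd w
  · exact hend.1

lemma endSet_futureSet (htr : Transitive r) (hd : RelDense r) {q : Set X × Set X}
    (hq : q ∈ endSet r) : IsFutureSet r q.2 := by
  rcases hq with ⟨w, rfl⟩ | ⟨c, _, hend⟩
  · exact isFutureSet_futPt htr hd w
  · exact hend.2.1

/-- Key order lemma: for any point of `X^end`, everything in its past component
chronologically precedes everything in its future component. -/
lemma endSet_rel (htr : Transitive r) (hd : RelDense r) {q : Set X × Set X}
    (hq : q ∈ endSet r) {a b : X} (ha : a ∈ q.1) (hb : b ∈ q.2) : r a b := by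
  rcases hq with ⟨w, rfl⟩ | ⟨c, hcc, hP, hF, hclause⟩
  · exact htr ha hb
  · rcases hclause with ⟨hc, h1, h2⟩ | ⟨hc, h1, h2⟩
    · rw [h1] at ha
      obtain ⟨_, ⟨k, rfl⟩, hak⟩ := ha
      obtain ⟨M, hM, hbM⟩ := exists_mem_maxIF htr hd hF hb
      obtain ⟨n, hn⟩ := mem_seqLI.1 ((h2 hM).2.1 hbM)
      have h3 : r (c (max n (k + 1))) b := hn _ (le_max_left _ _)
      have h4 : r (c k) (c (max n (k + 1))) :=
        hc.lt htr (lt_of_lt_of_le (Nat.lt_succ_self k) (le_max_right _ _))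
      exact htr hak (htr h4 h3)
    · rw [h1] at hb
      obtain ⟨_, ⟨k, rfl⟩, hkb⟩ := hb
      obtain ⟨M, hM, haM⟩ := exists_mem_maxIP htr hd hP ha
      obtain ⟨n, hn⟩ := mem_seqLI.1 ((h2 hM).2.1 haM)
      have h3 : r a (c (max n (k + 1))) := hn _ (le_max_left _ _)
      have h4 : r (c (max n (k + 1))) (c k) :=
        hc.lt htr (lt_of_lt_of_le (Nat.lt_succ_self k) (le_max_right _ _))
      exact htr h3 (htr h4 hkb)

variable {Xb : Set (Set X × Set X)}

lemma subRel_trans (htr : Transitive r) (hd : RelDense r) (hXb : Xb ⊆ endSet r) :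
    Transitive (subRel Xb) := by
  rintro a b c ⟨u, hu2, hu1⟩ ⟨v, hv2, hv1⟩
  have huv : r u v := endSet_rel htr hd (hXb b.2) hu1 hv2
  exact ⟨v, (endSet_futureSet htr hd (hXb a.2)).up hu2 huv, hv1⟩

lemma subRel_dense (htr : Transitive r) (hd : RelDense r) (hc : IsCompletion r Xb) :
    RelDense (subRel Xb) := by
  rintro a b ⟨u, hu2, hu1⟩
  obtain ⟨v, hv, huv⟩ := (endSet_pastSet htr hd (hc.2.1 b.2)).succ hu1
  obtain ⟨w, hw, hvw⟩ := (endSet_pastSet htr hd (hc.2.1 b.2)).succ hv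
  exact ⟨iota r Xb hc.1 v, ⟨u, hu2, huv⟩, ⟨w, hvw, hw⟩⟩

end Aux3

end CausalBoundary
namespace CausalBoundary

section MainFut

variable {X : Type*}

lemma main_fut {r : X → X → Prop} (htr : Transitive r) (hirr : Irreflexive r)
    (hd : RelDense r) {Xb : Set (Set X × Set X)} (hc : IsCompletion r Xb)
    (ς : ℕ → ↥Xb) (hch : IsFutureChain (subRel Xb) ς) :
    ∃ y : ↥Xb, IsEndpoint (subRel Xb) ς (inj (subRel Xb) y) := by
  have hPb : ∀ b : ↥Xb, IsPastSet r b.1.1 := fun b => endSet_pastSet htr hd (hc.2.1 b.2)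
  have hFb : ∀ b : ↥Xb, IsFutureSet r b.1.2 := fun b => endSet_futureSet htr hd (hc.2.1 b.2)
  have hA : ∀ (b : ↥Xb) {u v : X}, u ∈ b.1.1 → v ∈ b.1.2 → r u v :=
    fun b _ _ hu hv => endSet_rel htr hd (hc.2.1 b.2) hu hv
  have hρtr : Transitive (subRel Xb) := subRel_trans htr hd hc.2.1
  have hρd : RelDense (subRel Xb) := subRel_dense htr hd hc
  -- choose an interpolating chain in X
  have hch' : ∀ n, ∃ u : X, u ∈ (ς n).1.2 ∧ u ∈ (ς (n + 1)).1.1 := fun n => hch n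
  choose x hx1 hx2 using hch'
  have hxchain : IsFutureChain r x := fun n => hA (ς (n + 1)) (hx2 n) (hx1 (n + 1))
  obtain ⟨p, hpXb, hpP, hpF, hclause⟩ := hc.2.2 x (Or.inl hxchain)
  have hfc : p.1 = pastOf r (Set.range x) ∧ decF r p.2 ⊆ Lcheck r x := by
    rcases hclause with ⟨_, h1, h2⟩ | ⟨hpc, _, _⟩
    · exact ⟨h1, h2⟩
    · exact absurd (htr (hxchain 0) (hpc 0)) (hirr (x 0))
  set ρ := subRel Xb with hρ
  set y : ↥Xb := ⟨p, hpXb⟩ with hy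
  refine ⟨y, isPastSet_pastPt hρtr hρd y, isFutureSet_futPt hρtr hρd y, Or.inl ⟨hch, ?_, ?_⟩⟩
  · -- past component identification
    apply Set.Subset.antisymm
    · rintro a ⟨u, hu2, hu1⟩
      have hu1' : u ∈ pastOf r (Set.range x) := hfc.1 ▸ hu1
      obtain ⟨_, ⟨k, rfl⟩, huk⟩ := hu1'
      exact ⟨ς (k + 1), ⟨k + 1, rfl⟩, u, hu2, (hPb (ς (k + 1))).down (hx2 k) huk⟩
    · rintro a ⟨_, ⟨n, rfl⟩, u, hu2, hu1⟩
      refine ⟨u, hu2, ?_⟩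
      show u ∈ p.1
      rw [hfc.1]
      exact ⟨x n, ⟨n, rfl⟩, hA (ς n) hu1 (hx1 n)⟩
  · -- decF (futPt ρ y) ⊆ Lcheck ρ ς
    set S : Set ↥Xb := {b | ∀ n, x n ∈ b.1.1} with hSdef
    have hS_rel : ∀ b ∈ S, ∀ n, ρ (ς n) b := fun b hb n => ⟨x n, hx1 n, hb n⟩
    have hFS : futPt ρ y ⊆ S := by
      rintro b ⟨v, hv2, hv1⟩
      obtain ⟨M, hM, hvM⟩ := exists_mem_maxIF htr hd hpF hv2
      obtain ⟨N, hN⟩ := mem_seqLI.1 ((hfc.2 hM).2.1 hvM)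
      intro n
      have hxnv : r (x n) v := by
        rcases le_or_gt N n with h | h
        · exact hN n h
        · exact htr (hxchain.lt htr h) (hN N le_rfl)
      exact (hPb b).down hv1 hxnv
    have hLS_S : seqLS (fun n => futPt ρ (ς n)) ⊆ S := by
      intro b hb n
      obtain ⟨k, hk, hρkb⟩ := mem_seqLS.1 hb (n + 2)
      obtain ⟨k', rfl⟩ : ∃ k', k = k' + 1 := ⟨k - 1, by omega⟩
      obtain ⟨u, hu2, hu1⟩ := hρkb
      have h1 : r (x k') u := hA (ς (k' + 1)) (hx2 k') hu2
      have h2 : r (x n) (x k') := hxchain.lt htr (by omega)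
      exact (hPb b).down hu1 (htr h2 h1)
    rintro Q ⟨hQIF, hQF, hQmax⟩
    -- basic data from Q
    obtain ⟨b₀, hb₀⟩ := hQIF.2.1
    obtain ⟨e₀, he₀Q, he₀⟩ := hQIF.1.pred hb₀
    obtain ⟨u₀, hu₀2, hu₀1⟩ := he₀
    -- the set U of connecting elements of X
    set U : Set X := {u | ∃ e b : ↥Xb, e ∈ Q ∧ b ∈ Q ∧ u ∈ e.1.2 ∧ u ∈ b.1.1} with hUdef
    have hu₀U : u₀ ∈ U := ⟨e₀, b₀, he₀Q, hb₀, hu₀2, hu₀1⟩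
    have hUstep : ∀ u ∈ U, ∃ z ∈ U, r z u := by
      rintro u ⟨e, b, heQ, hbQ, hu2, hu1⟩
      obtain ⟨f, hfQ, hfe⟩ := hQIF.1.pred heQ
      obtain ⟨w, hw2, hw1⟩ := hfe
      exact ⟨w, ⟨f, e, hfQ, heQ, hw2, hw1⟩, hA e hw1 hu2⟩
    have hUdir : ∀ u ∈ U, ∀ u' ∈ U, ∃ z ∈ U, r z u ∧ r z u' := by
      rintro u ⟨e, b, heQ, hbQ, hu2, hu1⟩ u' ⟨e', b', heQ', hbQ', hu2', hu1'⟩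
      obtain ⟨f, hfQ, hfe, hfe'⟩ := hQIF.directed hρtr hρd heQ heQ'
      obtain ⟨w, hw2, hw1⟩ := hfe
      obtain ⟨w', hw2', hw1'⟩ := hfe'
      obtain ⟨g, hgQ, hgf⟩ := hQIF.1.pred hfQ
      obtain ⟨z, hz2, hz1⟩ := hgf
      exact ⟨z, ⟨g, f, hgQ, hfQ, hz2, hz1⟩,
        htr (hA f hz1 hw2) (hA e hw1 hu2),
        htr (hA f hz1 hw2') (hA e' hw1' hu2')⟩
    set Uh : Set X := futureOf r U with hUhdef
    have hUsub : U ⊆ Uh := fun u hu => (hUstep u hu).imp (fun z hz => ⟨hz.1, hz.2⟩)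
    have hUhF : IsFutureSet r Uh := isFutureSet_futureOf htr hd
    have hUhsubF : Uh ⊆ p.2 := by
      rintro z ⟨u, ⟨e, b, heQ, hbQ, hu2, hu1⟩, huz⟩
      obtain ⟨v, hv2, hv1⟩ := hQF heQ
      exact hpF.up (hpF.up hv2 (hA e hv1 hu2)) huz
    have hUhIF : IsIF r Uh := by
      apply isIF_of_directed hUhF ⟨u₀, hUsub hu₀U⟩
      rintro a ⟨u, hu, hua⟩ b ⟨u', hu', hub⟩
      obtain ⟨z, hz, hzu, hzu'⟩ := hUdir u hu u' hu'
      exact ⟨z, hUsub hz, htr hzu hua, htr hzu' hub⟩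
    obtain ⟨M, hMdec, hUM⟩ := exists_maxIF htr hd hpF hUhIF hUhsubF
    obtain ⟨hMIF, hMLI, hMLS, hMmax⟩ := hfc.2 hMdec
    obtain ⟨hMIF', hMsubF, hMmaxF⟩ := hMdec
    -- Q2 = future of M in the completion
    set Q2 : Set ↥Xb := {b | (M ∩ b.1.1).Nonempty} with hQ2def
    have hQ2F : Q2 ⊆ futPt ρ y := by
      rintro b ⟨m, hmM, hmb⟩
      exact ⟨m, hMsubF hmM, hmb⟩
    have hQ2IF : IsIF ρ Q2 := by
      have hQ2fs : IsFutureSet ρ Q2 := by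
        apply Set.Subset.antisymm
        · rintro b ⟨m, hmM, hmb⟩
          obtain ⟨m₂, hm₂M, hm₂⟩ := hMIF'.1.pred hmM
          obtain ⟨m₃, hm₃M, hm₃⟩ := hMIF'.1.pred hm₂M
          refine ⟨iota r Xb hc.1 m₂, ⟨m₃, hm₃M, hm₃⟩, ⟨m, hm₂, hmb⟩⟩
        · rintro z ⟨b, ⟨m, hmM, hmb⟩, w, hw2, hw1⟩
          exact ⟨w, hMIF'.1.up hmM (hA b hmb hw2), hw1⟩
      apply isIF_of_directed hQ2fs ⟨b₀, u₀, hUM (hUsub hu₀U), hu₀1⟩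
      rintro b ⟨m, hmM, hmb⟩ b' ⟨m', hmM', hmb'⟩
      obtain ⟨m₀, hm₀M, hm₀m, hm₀m'⟩ := hMIF'.directed htr hd hmM hmM'
      obtain ⟨m₁, hm₁M, hm₁⟩ := hMIF'.1.pred hm₀M
      obtain ⟨m₂, hm₂M, hm₂⟩ := hMIF'.1.pred hm₁M
      refine ⟨iota r Xb hc.1 m₁, ⟨m₂, hm₂M, hm₂⟩,
        ⟨m, htr hm₁ hm₀m, hmb⟩, ⟨m', htr hm₁ hm₀m', hmb'⟩⟩
    have hQQ2 : Q ⊆ Q2 := by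
      intro b hb
      obtain ⟨e, heQ, he⟩ := hQIF.1.pred hb
      obtain ⟨u, hu2, hu1⟩ := he
      exact ⟨u, hUM (hUsub ⟨e, b, heQ, hb, hu2, hu1⟩), hu1⟩
    have hQ2eq : Q = Q2 := hQmax Q2 hQ2IF hQ2F hQQ2
    refine ⟨hQIF, ?_, ?_, ?_⟩
    · intro b hb
      exact mem_seqLI.2 ⟨0, fun k _ => hS_rel b (hFS (hQF hb)) k⟩
    · intro b hb
      exact seqLI_subset_seqLS (mem_seqLI.2 ⟨0, fun k _ => hS_rel b (hFS (hQF hb)) k⟩)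
    · intro Q' hQ'IF hQ'LS hQQ'
      apply Set.Subset.antisymm hQQ'
      intro b hbQ'
      have hQ'S : Q' ⊆ S := fun e he => hLS_S (hQ'LS he)
      set N : Set X := {u | ∃ e : ↥Xb, e ∈ Q' ∧ u ∈ e.1.2} with hNdef
      have hNfs : IsFutureSet r N := by
        apply Set.Subset.antisymm
        · rintro u ⟨e, heQ', hu⟩
          obtain ⟨w, hw, hwu⟩ := (hFb e).pred hu
          exact ⟨w, ⟨e, heQ', hw⟩, hwu⟩
        · rintro z ⟨u, ⟨e, heQ', hu⟩, huz⟩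
          exact ⟨e, heQ', (hFb e).up hu huz⟩
      have hNIF : IsIF r N := by
        apply isIF_of_directed hNfs ⟨u₀, e₀, hQQ' he₀Q, hu₀2⟩
        rintro u ⟨e, heQ', hu⟩ u' ⟨e', heQ'', hu'⟩
        obtain ⟨f, hfQ', hfe, hfe'⟩ := hQ'IF.directed hρtr hρd heQ' heQ''
        obtain ⟨w, hw2, hw1⟩ := hfe
        obtain ⟨w', hw2', hw1'⟩ := hfe'
        obtain ⟨g, hgQ', hgf⟩ := hQ'IF.1.pred hfQ'
        obtain ⟨z, hz2, hz1⟩ := hgf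
        exact ⟨z, ⟨g, hgQ', hz2⟩,
          htr (hA f hz1 hw2) (hA e hw1 hu),
          htr (hA f hz1 hw2') (hA e' hw1' hu')⟩
      have hNLS : N ⊆ seqLS fun n => futPt r (x n) := by
        rintro u ⟨e, heQ', hu⟩
        exact seqLI_subset_seqLS (mem_seqLI.2 ⟨0, fun k _ => hA e (hQ'S heQ' k) hu⟩)
      have hMN : M ⊆ N := by
        intro m hm
        obtain ⟨m₂, hm₂M, hm₂⟩ := hMIF'.1.pred hm
        obtain ⟨m₃, hm₃M, hm₃⟩ := hMIF'.1.pred hm₂M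
        have he2 : iota r Xb hc.1 m₂ ∈ Q2 := ⟨m₃, hm₃M, hm₃⟩
        exact ⟨iota r Xb hc.1 m₂, hQQ' (hQ2eq ▸ he2), hm₂⟩
      have hMeqN : M = N := hMmax N hNIF hNLS hMN
      obtain ⟨e, heQ', he⟩ := hQ'IF.1.pred hbQ'
      obtain ⟨u, hu2, hu1⟩ := he
      have huM : u ∈ M := hMeqN ▸ (⟨e, heQ', hu2⟩ : u ∈ N)
      rw [hQ2eq]
      exact ⟨u, huM, hu1⟩

end MainFut

end CausalBoundary
namespace CausalBoundary

section MainPast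

variable {X : Type*}

lemma main_past {r : X → X → Prop} (htr : Transitive r) (hirr : Irreflexive r)
    (hd : RelDense r) {Xb : Set (Set X × Set X)} (hc : IsCompletion r Xb)
    (ς : ℕ → ↥Xb) (hch : IsPastChain (subRel Xb) ς) :
    ∃ y : ↥Xb, IsEndpoint (subRel Xb) ς (inj (subRel Xb) y) := by
  have hPb : ∀ b : ↥Xb, IsPastSet r b.1.1 := fun b => endSet_pastSet htr hd (hc.2.1 b.2)
  have hFb : ∀ b : ↥Xb, IsFutureSet r b.1.2 := fun b => endSet_futureSet htr hd (hc.2.1 b.2)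
  have hA : ∀ (b : ↥Xb) {u v : X}, u ∈ b.1.1 → v ∈ b.1.2 → r u v :=
    fun b _ _ hu hv => endSet_rel htr hd (hc.2.1 b.2) hu hv
  have hρtr : Transitive (subRel Xb) := subRel_trans htr hd hc.2.1
  have hρd : RelDense (subRel Xb) := subRel_dense htr hd hc
  -- choose an interpolating chain in X
  have hch' : ∀ n, ∃ u : X, u ∈ (ς (n + 1)).1.2 ∧ u ∈ (ς n).1.1 := fun n => hch n
  choose x hx1 hx2 using hch'
  have hxchain : IsPastChain r x := fun n => hA (ς (n + 1)) (hx2 (n + 1)) (hx1 n)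
  obtain ⟨p, hpXb, hpP, hpF, hclause⟩ := hc.2.2 x (Or.inr hxchain)
  have hfc : p.2 = futureOf r (Set.range x) ∧ decP r p.1 ⊆ Lhat r x := by
    rcases hclause with ⟨hfcx, _, _⟩ | ⟨_, h1, h2⟩
    · exact absurd (htr (hfcx 0) (hxchain 0)) (hirr (x 0))
    · exact ⟨h1, h2⟩
  set ρ := subRel Xb with hρ
  set y : ↥Xb := ⟨p, hpXb⟩ with hy
  refine ⟨y, isPastSet_pastPt hρtr hρd y, isFutureSet_futPt hρtr hρd y, Or.inr ⟨hch, ?_, ?_⟩⟩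
  · -- future component identification
    apply Set.Subset.antisymm
    · rintro b ⟨u, hu2, hu1⟩
      have hu2' : u ∈ futureOf r (Set.range x) := hfc.1 ▸ hu2
      obtain ⟨_, ⟨k, rfl⟩, huk⟩ := hu2'
      exact ⟨ς (k + 1), ⟨k + 1, rfl⟩, u, (hFb (ς (k + 1))).up (hx1 k) huk, hu1⟩
    · rintro b ⟨_, ⟨n, rfl⟩, u, hu2, hu1⟩
      refine ⟨u, ?_, hu1⟩
      show u ∈ p.2
      rw [hfc.1]
      exact ⟨x n, ⟨n, rfl⟩, hA (ς n) (hx2 n) hu2⟩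
  · -- decP (pastPt ρ y) ⊆ Lhat ρ ς
    set S : Set ↥Xb := {b | ∀ n, x n ∈ b.1.2} with hSdef
    have hS_rel : ∀ b ∈ S, ∀ n, ρ b (ς n) := fun b hb n => ⟨x n, hb n, hx2 n⟩
    have hFS : pastPt ρ y ⊆ S := by
      rintro b ⟨v, hv2, hv1⟩
      obtain ⟨M, hM, hvM⟩ := exists_mem_maxIP htr hd hpP hv1
      obtain ⟨N, hN⟩ := mem_seqLI.1 ((hfc.2 hM).2.1 hvM)
      intro n
      have hvxn : r v (x n) := by
        rcases le_or_gt N n with h | h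
        · exact hN n h
        · exact htr (hN N le_rfl) (hxchain.lt htr h)
      exact (hFb b).up hv2 hvxn
    have hLS_S : seqLS (fun n => pastPt ρ (ς n)) ⊆ S := by
      intro b hb n
      obtain ⟨k, hk, hρbk⟩ := mem_seqLS.1 hb (n + 2)
      obtain ⟨k', rfl⟩ : ∃ k', k = k' + 1 := ⟨k - 1, by omega⟩
      obtain ⟨u, hu2, hu1⟩ := hρbk
      have h1 : r u (x k') := hA (ς (k' + 1)) hu1 (hx1 k')
      have h2 : r (x k') (x n) := hxchain.lt htr (by omega)
      exact (hFb b).up hu2 (htr h1 h2)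
    rintro Q ⟨hQIP, hQP, hQmax⟩
    -- basic data from Q
    obtain ⟨b₀, hb₀⟩ := hQIP.2.1
    obtain ⟨e₀, he₀Q, he₀⟩ := hQIP.1.succ hb₀
    obtain ⟨u₀, hu₀2, hu₀1⟩ := he₀
    -- u₀ ∈ b₀.1.2 ∩ e₀.1.1
    set U : Set X := {u | ∃ e b : ↥Xb, e ∈ Q ∧ b ∈ Q ∧ u ∈ e.1.1 ∧ u ∈ b.1.2} with hUdef
    have hu₀U : u₀ ∈ U := ⟨e₀, b₀, he₀Q, hb₀, hu₀1, hu₀2⟩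
    have hUstep : ∀ u ∈ U, ∃ z ∈ U, r u z := by
      rintro u ⟨e, b, heQ, hbQ, hu1, hu2⟩
      obtain ⟨f, hfQ, hef⟩ := hQIP.1.succ heQ
      obtain ⟨w, hw2, hw1⟩ := hef
      exact ⟨w, ⟨f, e, hfQ, heQ, hw1, hw2⟩, hA e hu1 hw2⟩
    have hUdir : ∀ u ∈ U, ∀ u' ∈ U, ∃ z ∈ U, r u z ∧ r u' z := by
      rintro u ⟨e, b, heQ, hbQ, hu1, hu2⟩ u' ⟨e', b', heQ', hbQ', hu1', hu2'⟩
      obtain ⟨f, hfQ, hef, hef'⟩ := hQIP.directed hρtr hρd heQ heQ'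
      obtain ⟨w, hw2, hw1⟩ := hef
      obtain ⟨w', hw2', hw1'⟩ := hef'
      obtain ⟨g, hgQ, hfg⟩ := hQIP.1.succ hfQ
      obtain ⟨z, hz2, hz1⟩ := hfg
      exact ⟨z, ⟨g, f, hgQ, hfQ, hz1, hz2⟩,
        htr (hA e hu1 hw2) (hA f hw1 hz2),
        htr (hA e' hu1' hw2') (hA f hw1' hz2)⟩
    set Uh : Set X := pastOf r U with hUhdef
    have hUsub : U ⊆ Uh := fun u hu => (hUstep u hu).imp (fun z hz => ⟨hz.1, hz.2⟩)
    have hUhP : IsPastSet r Uh := isPastSet_pastOf htr hd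
    have hUhsubP : Uh ⊆ p.1 := by
      rintro z ⟨u, ⟨e, b, heQ, hbQ, hu1, hu2⟩, hzu⟩
      obtain ⟨v, hv2, hv1⟩ := hQP heQ
      exact hpP.down (hpP.down hv1 (hA e hu1 hv2)) hzu
    have hUhIP : IsIP r Uh := by
      apply isIP_of_directed hUhP ⟨u₀, hUsub hu₀U⟩
      rintro a ⟨u, hu, hau⟩ b ⟨u', hu', hbu⟩
      obtain ⟨z, hz, huz, huz'⟩ := hUdir u hu u' hu'
      exact ⟨z, hUsub hz, htr hau huz, htr hbu huz'⟩
    obtain ⟨M, hMdec, hUM⟩ := exists_maxIP htr hd hpP hUhIP hUhsubP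
    obtain ⟨hMIP, hMLI, hMLS, hMmax⟩ := hfc.2 hMdec
    obtain ⟨hMIP', hMsubP, hMmaxP⟩ := hMdec
    -- Q2 = past of M in the completion
    set Q2 : Set ↥Xb := {b | (M ∩ b.1.2).Nonempty} with hQ2def
    have hQ2P : Q2 ⊆ pastPt ρ y := by
      rintro b ⟨m, hmM, hmb⟩
      exact ⟨m, hmb, hMsubP hmM⟩
    have hQ2IP : IsIP ρ Q2 := by
      have hQ2ps : IsPastSet ρ Q2 := by
        apply Set.Subset.antisymm
        · rintro b ⟨m, hmM, hmb⟩
          obtain ⟨m₂, hm₂M, hm₂⟩ := hMIP'.1.succ hmM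
          obtain ⟨m₃, hm₃M, hm₃⟩ := hMIP'.1.succ hm₂M
          refine ⟨iota r Xb hc.1 m₂, ⟨m₃, hm₃M, hm₃⟩, ⟨m, hmb, hm₂⟩⟩
        · rintro z ⟨b, ⟨m, hmM, hmb⟩, w, hw2, hw1⟩
          exact ⟨w, hMIP'.1.down hmM (hA b hw1 hmb), hw2⟩
      apply isIP_of_directed hQ2ps ⟨b₀, u₀, hUM (hUsub hu₀U), hu₀2⟩
      rintro b ⟨m, hmM, hmb⟩ b' ⟨m', hmM', hmb'⟩
      obtain ⟨m₀, hm₀M, hmm₀, hmm₀'⟩ := hMIP'.directed htr hd hmM hmM'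
      obtain ⟨m₁, hm₁M, hm₁⟩ := hMIP'.1.succ hm₀M
      obtain ⟨m₂, hm₂M, hm₂⟩ := hMIP'.1.succ hm₁M
      refine ⟨iota r Xb hc.1 m₁, ⟨m₂, hm₂M, hm₂⟩,
        ⟨m, hmb, htr hmm₀ hm₁⟩, ⟨m', hmb', htr hmm₀' hm₁⟩⟩
    have hQQ2 : Q ⊆ Q2 := by
      intro b hb
      obtain ⟨e, heQ, he⟩ := hQIP.1.succ hb
      obtain ⟨u, hu2, hu1⟩ := he
      exact ⟨u, hUM (hUsub ⟨e, b, heQ, hb, hu1, hu2⟩), hu2⟩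
    have hQ2eq : Q = Q2 := hQmax Q2 hQ2IP hQ2P hQQ2
    refine ⟨hQIP, ?_, ?_, ?_⟩
    · intro b hb
      exact mem_seqLI.2 ⟨0, fun k _ => hS_rel b (hFS (hQP hb)) k⟩
    · intro b hb
      exact seqLI_subset_seqLS (mem_seqLI.2 ⟨0, fun k _ => hS_rel b (hFS (hQP hb)) k⟩)
    · intro Q' hQ'IP hQ'LS hQQ'
      apply Set.Subset.antisymm hQQ'
      intro b hbQ'
      have hQ'S : Q' ⊆ S := fun e he => hLS_S (hQ'LS he)
      set N : Set X := {u | ∃ e : ↥Xb, e ∈ Q' ∧ u ∈ e.1.1} with hNdef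
      have hNps : IsPastSet r N := by
        apply Set.Subset.antisymm
        · rintro u ⟨e, heQ', hu⟩
          obtain ⟨w, hw, huw⟩ := (hPb e).succ hu
          exact ⟨w, ⟨e, heQ', hw⟩, huw⟩
        · rintro z ⟨u, ⟨e, heQ', hu⟩, hzu⟩
          exact ⟨e, heQ', (hPb e).down hu hzu⟩
      have hNIP : IsIP r N := by
        apply isIP_of_directed hNps ⟨u₀, e₀, hQQ' he₀Q, hu₀1⟩
        rintro u ⟨e, heQ', hu⟩ u' ⟨e', heQ'', hu'⟩
        obtain ⟨f, hfQ', hef, hef'⟩ := hQ'IP.directed hρtr hρd heQ' heQ''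
        obtain ⟨w, hw2, hw1⟩ := hef
        obtain ⟨w', hw2', hw1'⟩ := hef'
        obtain ⟨g, hgQ', hfg⟩ := hQ'IP.1.succ hfQ'
        obtain ⟨z, hz2, hz1⟩ := hfg
        exact ⟨z, ⟨g, hgQ', hz1⟩,
          htr (hA e hu hw2) (hA f hw1 hz2),
          htr (hA e' hu' hw2') (hA f hw1' hz2)⟩
      have hNLS : N ⊆ seqLS fun n => pastPt r (x n) := by
        rintro u ⟨e, heQ', hu⟩
        exact seqLI_subset_seqLS (mem_seqLI.2 ⟨0, fun k _ => hA e hu (hQ'S heQ' k)⟩)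
      have hMN : M ⊆ N := by
        intro m hm
        obtain ⟨m₂, hm₂M, hm₂⟩ := hMIP'.1.succ hm
        obtain ⟨m₃, hm₃M, hm₃⟩ := hMIP'.1.succ hm₂M
        have he2 : iota r Xb hc.1 m₂ ∈ Q2 := ⟨m₃, hm₃M, hm₃⟩
        exact ⟨iota r Xb hc.1 m₂, hQQ' (hQ2eq ▸ he2), hm₂⟩
      have hMeqN : M = N := hMmax N hNIP hNLS hMN
      obtain ⟨e, heQ', he⟩ := hQ'IP.1.succ hbQ'
      obtain ⟨u, hu2, hu1⟩ := he
      have huM : u ∈ M := hMeqN ▸ (⟨e, heQ', hu1⟩ : u ∈ N)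
      rw [hQ2eq]
      exact ⟨u, huM, hu2⟩

end MainPast

end CausalBoundary

/-- Thm. 5.4, Completeness: any completion `(X̄, ≪̄)` of a weakly
distinguishing chronological set is complete: every chain in `X̄` has some endpoint in
`i_{X̄}[X̄]`. -/
theorem stmt11 {X : Type*} (r : X → X → Prop) (h : IsChronSet r) (hw : WeaklyDist r)
    (Xb : Set (Set X × Set X)) (hc : IsCompletion r Xb)
    (ς : ℕ → ↥Xb) (hch : IsChronChain (subRel Xb) ς) :
    ∃ y : ↥Xb, IsEndpoint (subRel Xb) ς (inj (subRel Xb) y) := by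
  obtain ⟨htr, hirr, -, D, -, hD⟩ := h
  have hd : RelDense r := fun a b hab => by
    obtain ⟨d, -, h1, h2⟩ := hD a b hab
    exact ⟨d, h1, h2⟩
  rcases hch with hf | hp
  · exact main_fut htr hirr hd hc ς hf
  · exact main_past htr hirr hd hc ς hp
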